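/- arXiv:1710.06063 — 3 statements merged into one kernel-verified Lean document; each statement's English description precedes it below -/
import Mathlib

section
/- There exists a constant C > 0 (depending only on w₋, w₊) such that the unique global smooth solution w(t,x) of the Burgers Cauchy problem satisfies, for every t > 0 and every p ∈ [1, ∞], the decay estimate ‖∂_x w(t,·)‖_{L^p(ℝ)} ≤ C · min( w̃ , w̃^{1/p} t^{−1+1/p} ). -/
open MeasureTheory Set Filter
open scoped ENNReal

noncomputable section

/-- Smooth tanh-profile initial data for the Burgers Cauchy problem. -/
def burgersInit (wm wp x : ℝ) : ℝ := (wp + wm) / 2 + (wp - wm) / 2 * Real.tanh x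

/-- `w` is a global smooth solution, for `t ≥ 0`, of the Burgers Cauchy problem
`w_t + w w_x = 0`, `w(0,x) = (w₊+w₋)/2 + ((w₊-w₋)/2) tanh x`. -/
structure IsBurgersSol (wm wp : ℝ) (w : ℝ → ℝ → ℝ) : Prop where
  smooth : ContDiffOn ℝ (⊤ : ℕ∞) (fun q : ℝ × ℝ => w q.1 q.2)
    ((Set.Ici (0:ℝ)) ×ˢ (Set.univ : Set ℝ))
  init : ∀ x, w 0 x = burgersInit wm wp x
  eq : ∀ t ∈ Set.Ici (0:ℝ), ∀ x : ℝ,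
    derivWithin (fun s => w s x) (Set.Ici 0) t + w t x * deriv (w t) x = 0

/-- The rarefaction fan `w^r`. -/
def rarefactionFan (wm wp ξ : ℝ) : ℝ := if ξ < wm then wm else if ξ ≤ wp then ξ else wp

/-- Second eigenvalue `λ₂(ρ,u) = u + ρ^{(γ-1)/2}` of the 1D isentropic Euler system. -/
def lam2 (γ ρ u : ℝ) : ℝ := u + ρ ^ ((γ - 1) / 2)

/-- 2-Riemann invariant `z₂(ρ,u) = u - (2/(γ-1)) ρ^{(γ-1)/2}`. -/
def z2 (γ ρ u : ℝ) : ℝ := u - 2 / (γ - 1) * ρ ^ ((γ - 1) / 2)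

/-- The γ-law pressure `p(ρ) = ρ^γ/γ`. -/
def pres (γ ρ : ℝ) : ℝ := ρ ^ γ / γ

/-- The smooth approximate 2-rarefaction wave `(ρ̄,ū)` built from the Burgers solution `w`:
`λ₂(ρ̄,ū)(t,x) = w(1+t,x)` and `z₂(ρ̄,ū)(t,x) = z₂(ρ₊,u₊)`. -/
structure IsApproxRarefaction (γ ρp up : ℝ) (w ρb ub : ℝ → ℝ → ℝ) : Prop where
  pos : ∀ t ∈ Set.Ici (0:ℝ), ∀ x : ℝ, 0 < ρb t x
  lam : ∀ t ∈ Set.Ici (0:ℝ), ∀ x : ℝ, lam2 γ (ρb t x) (ub t x) = w (1 + t) x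
  inv : ∀ t ∈ Set.Ici (0:ℝ), ∀ x : ℝ, z2 γ (ρb t x) (ub t x) = z2 γ ρp up

/-- The exact 2-rarefaction wave profile `(ρ^r,u^r)` as a function of `ξ = x/t`:
`λ₂(ρ^r,u^r)(ξ) = w^r(ξ)` and `z₂(ρ^r,u^r)(ξ) = z₂(ρ₊,u₊)`. -/
structure IsRarefactionProfile (γ ρm um ρp up : ℝ) (ρr ur : ℝ → ℝ) : Prop where
  pos : ∀ ξ : ℝ, 0 < ρr ξ
  lam : ∀ ξ : ℝ, lam2 γ (ρr ξ) (ur ξ) = rarefactionFan (lam2 γ ρm um) (lam2 γ ρp up) ξ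
  inv : ∀ ξ : ℝ, z2 γ (ρr ξ) (ur ξ) = z2 γ ρp up

/-- Riemann initial data. -/
def riemannData (am ap x : ℝ) : ℝ := if x < 0 then am else ap

/-- Partial derivative in `x` of a function on ℝ². -/
def pdx (g : ℝ → ℝ → ℝ) (x y : ℝ) : ℝ := deriv (fun x' => g x' y) x

/-- Partial derivative in `y` of a function on ℝ². -/
def pdy (g : ℝ → ℝ → ℝ) (x y : ℝ) : ℝ := deriv (fun y' => g x y') y

/-- Time derivative (within the time interval `S`). -/
def pdt (S : Set ℝ) (f : ℝ → ℝ → ℝ → ℝ) (t x y : ℝ) : ℝ :=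
  derivWithin (fun s => f s x y) S t

/-- Integral over the strip ℝ × 𝕋 (𝕋 realized as `[0,1)`, functions being 1-periodic
in `y`) of a nonnegative integrand. -/
def eInt (F : ℝ → ℝ → ℝ) : ℝ≥0∞ :=
  ∫⁻ x : ℝ, ∫⁻ y in Set.Ico (0:ℝ) 1, ENNReal.ofReal (F x y)

/-- `|∇g|²`. -/
def d1sq (g : ℝ → ℝ → ℝ) (x y : ℝ) : ℝ := (pdx g x y) ^ 2 + (pdy g x y) ^ 2
/-- `|∇²g|²`. -/
def d2sq (g : ℝ → ℝ → ℝ) (x y : ℝ) : ℝ := d1sq (pdx g) x y + d1sq (pdy g) x y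
/-- `|∇³g|²`. -/
def d3sq (g : ℝ → ℝ → ℝ) (x y : ℝ) : ℝ := d2sq (pdx g) x y + d2sq (pdy g) x y

/-- Squared `L²(ℝ×𝕋)` norm. -/
def L2sq (g : ℝ → ℝ → ℝ) : ℝ≥0∞ := eInt (fun x y => (g x y) ^ 2)

/-- `‖∇g‖²`. -/
def grad1sq (g : ℝ → ℝ → ℝ) : ℝ≥0∞ := eInt (d1sq g)
/-- `‖∇²g‖²`. -/
def grad2sq (g : ℝ → ℝ → ℝ) : ℝ≥0∞ := eInt (d2sq g)
/-- `‖∇³g‖²`. -/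
def grad3sq (g : ℝ → ℝ → ℝ) : ℝ≥0∞ := eInt (d3sq g)

/-- `‖∇g‖₁² = ‖∇g‖² + ‖∇²g‖²`. -/
def gradH1sq (g : ℝ → ℝ → ℝ) : ℝ≥0∞ := grad1sq g + grad2sq g

/-- Squared `H¹` norm. -/
def H1sq (g : ℝ → ℝ → ℝ) : ℝ≥0∞ := L2sq g + grad1sq g
/-- Squared `H²` norm. -/
def H2sq (g : ℝ → ℝ → ℝ) : ℝ≥0∞ := L2sq g + grad1sq g + grad2sq g

/-- `‖(φ,Ψ)‖²` for the triple `(φ,ψ₁,ψ₂)`. -/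
def tripL2sq (φ ψ1 ψ2 : ℝ → ℝ → ℝ) : ℝ≥0∞ := L2sq φ + L2sq ψ1 + L2sq ψ2
/-- `‖(φ,Ψ)‖₁²`. -/
def tripH1sq (φ ψ1 ψ2 : ℝ → ℝ → ℝ) : ℝ≥0∞ := H1sq φ + H1sq ψ1 + H1sq ψ2
/-- `‖(φ,Ψ)‖₂²`. -/
def tripH2sq (φ ψ1 ψ2 : ℝ → ℝ → ℝ) : ℝ≥0∞ := H2sq φ + H2sq ψ1 + H2sq ψ2

/-- `‖wt^{1/2}(φ,ψ₁)‖² = ∫∫ wt(x) (φ² + ψ₁²) dx dy`. -/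
def wtSq (wt : ℝ → ℝ) (φ ψ1 : ℝ → ℝ → ℝ) : ℝ≥0∞ :=
  eInt (fun x y => wt x * ((φ x y) ^ 2 + (ψ1 x y) ^ 2))

/-- Smooth solution, periodic in `y`, of the 2D isentropic compressible
Navier–Stokes equations on ℝ×𝕋, for times in `S`. -/
structure IsNSSol (μ lam γ : ℝ) (S : Set ℝ) (ρ u v : ℝ → ℝ → ℝ → ℝ) : Prop where
  smooth_rho : ContDiffOn ℝ (⊤ : ℕ∞) (fun q : ℝ × ℝ × ℝ => ρ q.1 q.2.1 q.2.2)
    (S ×ˢ (Set.univ : Set (ℝ × ℝ)))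
  smooth_u : ContDiffOn ℝ (⊤ : ℕ∞) (fun q : ℝ × ℝ × ℝ => u q.1 q.2.1 q.2.2)
    (S ×ˢ (Set.univ : Set (ℝ × ℝ)))
  smooth_v : ContDiffOn ℝ (⊤ : ℕ∞) (fun q : ℝ × ℝ × ℝ => v q.1 q.2.1 q.2.2)
    (S ×ˢ (Set.univ : Set (ℝ × ℝ)))
  periodic_rho : ∀ t x y, ρ t x (y + 1) = ρ t x y
  periodic_u : ∀ t x y, u t x (y + 1) = u t x y
  periodic_v : ∀ t x y, v t x (y + 1) = v t x y
  mass : ∀ t ∈ S, ∀ x y : ℝ,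
    pdt S ρ t x y + pdx (fun a b => ρ t a b * u t a b) x y
      + pdy (fun a b => ρ t a b * v t a b) x y = 0
  momx : ∀ t ∈ S, ∀ x y : ℝ,
    pdt S (fun s a b => ρ s a b * u s a b) t x y
      + pdx (fun a b => ρ t a b * (u t a b) ^ 2 + pres γ (ρ t a b)) x y
      + pdy (fun a b => ρ t a b * u t a b * v t a b) x y
      = μ * (pdx (pdx (u t)) x y + pdy (pdy (u t)) x y)
        + (μ + lam) * pdx (fun a b => pdx (u t) a b + pdy (v t) a b) x y
  momy : ∀ t ∈ S, ∀ x y : ℝ,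
    pdt S (fun s a b => ρ s a b * v s a b) t x y
      + pdx (fun a b => ρ t a b * u t a b * v t a b) x y
      + pdy (fun a b => ρ t a b * (v t a b) ^ 2 + pres γ (ρ t a b)) x y
      = μ * (pdx (pdx (v t)) x y + pdy (pdy (v t)) x y)
        + (μ + lam) * pdy (fun a b => pdx (u t) a b + pdy (v t) a b) x y

/-- Regularity class of the perturbation `(φ,Ψ) = (ρ-ρ̄, u-ū, v)`:
`(φ,Ψ) ∈ C⁰(S;H²)`, `∇φ ∈ L²(S;H¹)`, `∇Ψ ∈ L²(S;H²)`. -/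
def PerturbReg (ρb ub : ℝ → ℝ → ℝ) (ρ u v : ℝ → ℝ → ℝ → ℝ) (S : Set ℝ) : Prop :=
  (∀ t ∈ S, tripH2sq (fun x y => ρ t x y - ρb t x)
      (fun x y => u t x y - ub t x) (v t) < ⊤) ∧
  ContinuousOn (fun t => tripH2sq (fun x y => ρ t x y - ρb t x)
      (fun x y => u t x y - ub t x) (v t)) S ∧
  (∫⁻ t in S, gradH1sq (fun x y => ρ t x y - ρb t x)) < ⊤ ∧
  (∫⁻ t in S, (gradH1sq (fun x y => u t x y - ub t x)
      + grad3sq (fun x y => u t x y - ub t x)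
      + gradH1sq (v t) + grad3sq (v t))) < ⊤

/-- Regularity class in the main theorem: `(ρ-ρ^r, u-u^r, v) ∈ C⁰(0,∞;L²)`,
`(∇ρ,∇𝐮) ∈ C⁰(0,∞;H¹)`, `∇³𝐮 ∈ L²(0,∞;L²)`. -/
def NSRegular (ρr ur : ℝ → ℝ) (ρ u v : ℝ → ℝ → ℝ → ℝ) : Prop :=
  (∀ t : ℝ, 0 < t →
    tripL2sq (fun x y => ρ t x y - ρr (x / t))
      (fun x y => u t x y - ur (x / t)) (v t) < ⊤) ∧
  ContinuousOn (fun t : ℝ => tripL2sq (fun x y => ρ t x y - ρr (x / t))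
      (fun x y => u t x y - ur (x / t)) (v t)) (Set.Ioi 0) ∧
  (∀ t : ℝ, 0 ≤ t → gradH1sq (ρ t) + gradH1sq (u t) + gradH1sq (v t) < ⊤) ∧
  ContinuousOn (fun t : ℝ => gradH1sq (ρ t) + gradH1sq (u t) + gradH1sq (v t))
    (Set.Ici 0) ∧
  (∫⁻ t in Set.Ici (0:ℝ), (grad3sq (u t) + grad3sq (v t))) < ⊤

namespace BurgersLpAux

lemma tanh_hasDerivAt (x : ℝ) : HasDerivAt Real.tanh (1 / Real.cosh x ^ 2) x := by
  have hd := (Real.hasDerivAt_sinh x).div (Real.hasDerivAt_cosh x) (Real.cosh_pos x).ne'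
  have he : Real.tanh = fun y => Real.sinh y / Real.cosh y :=
    funext fun y => Real.tanh_eq_sinh_div_cosh y
  rw [he]
  refine hd.congr_deriv ?_
  have h1 := Real.cosh_sq_sub_sinh_sq x
  rw [div_left_inj' (pow_ne_zero 2 (Real.cosh_pos x).ne')]
  nlinarith [Real.cosh_pos x]

lemma tanh_diff : Differentiable ℝ Real.tanh := fun x => (tanh_hasDerivAt x).differentiableAt

lemma tanh_deriv (x : ℝ) : deriv Real.tanh x = 1 / Real.cosh x ^ 2 :=
  (tanh_hasDerivAt x).deriv

lemma tanh_mono : Monotone Real.tanh := by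
  apply monotone_of_deriv_nonneg tanh_diff
  intro x
  rw [tanh_deriv]
  positivity

lemma tanh_lip : LipschitzWith 1 Real.tanh := by
  apply lipschitzWith_of_nnnorm_deriv_le tanh_diff
  intro x
  rw [tanh_deriv]
  rw [← NNReal.coe_le_coe]
  simp only [coe_nnnorm, Real.norm_eq_abs, NNReal.coe_one]
  rw [abs_of_nonneg (by positivity)]
  rw [div_le_one (by positivity)]
  nlinarith [Real.one_le_cosh x]

lemma abs_tanh_le_one (x : ℝ) : |Real.tanh x| ≤ 1 := by
  rw [Real.tanh_eq_sinh_div_cosh, abs_div, abs_of_pos (Real.cosh_pos x),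
    div_le_one (Real.cosh_pos x), abs_le]
  constructor
  · nlinarith [Real.sinh_lt_cosh (-x), Real.sinh_neg x, Real.cosh_neg x]
  · exact (Real.sinh_lt_cosh x).le

variable {wm wp : ℝ} {w : ℝ → ℝ → ℝ}

lemma w0_mono (h : wm < wp) : Monotone (burgersInit wm wp) := by
  intro a b hab
  unfold burgersInit
  have := tanh_mono hab
  nlinarith

lemma w0_mem (h : wm < wp) (x : ℝ) : burgersInit wm wp x ∈ Set.Icc wm wp := by
  have h1 := abs_le.1 (abs_tanh_le_one x)
  unfold burgersInit
  constructor <;> nlinarith [h1.1, h1.2]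

lemma w0_lip (h : wm < wp) {a b : ℝ} (hab : a ≤ b) :
    burgersInit wm wp b - burgersInit wm wp a ≤ (wp - wm) / 2 * (b - a) := by
  have h1 : |Real.tanh b - Real.tanh a| ≤ |b - a| := by
    have := tanh_lip.dist_le_mul b a
    simpa [Real.dist_eq] using this
  have h2 : Real.tanh b - Real.tanh a ≤ b - a := by
    have h3 := le_trans (le_abs_self _) h1
    rwa [abs_of_nonneg (by linarith : (0:ℝ) ≤ b - a)] at h3
  unfold burgersInit
  nlinarith

lemma w0_cont : Continuous (burgersInit wm wp) := by
  unfold burgersInit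
  exact continuous_const.add (continuous_const.mul tanh_diff.continuous)

lemma burgers_partials (hw : IsBurgersSol wm wp w) {t : ℝ} (ht : 0 ≤ t) (x : ℝ) :
    HasDerivWithinAt (fun s' => w s' x)
        (fderivWithin ℝ (fun q : ℝ × ℝ => w q.1 q.2) (Ici (0:ℝ) ×ˢ univ) (t, x) (1, 0))
        (Ici 0) t ∧
      HasDerivAt (w t)
        (fderivWithin ℝ (fun q : ℝ × ℝ => w q.1 q.2) (Ici (0:ℝ) ×ˢ univ) (t, x) (0, 1)) x := by
  set F : ℝ × ℝ → ℝ := fun q => w q.1 q.2 with hFdef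
  set s : Set (ℝ × ℝ) := Ici (0:ℝ) ×ˢ univ with hsdef
  have hqmem : (t, x) ∈ s := ⟨ht, mem_univ _⟩
  have hFd : HasFDerivWithinAt F (fderivWithin ℝ F s (t, x)) s (t, x) :=
    ((hw.smooth.differentiableOn (by simp)) _ hqmem).hasFDerivWithinAt
  constructor
  · have hι : HasDerivWithinAt (fun s' : ℝ => (s', x)) ((1:ℝ), (0:ℝ)) (Ici 0) t :=
      ((hasDerivAt_id t).prodMk (hasDerivAt_const t x)).hasDerivWithinAt
    have hmaps : MapsTo (fun s' : ℝ => (s', x)) (Ici 0) s := fun a ha => ⟨ha, mem_univ _⟩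
    exact hFd.comp_hasDerivWithinAt t hι hmaps
  · have hι : HasDerivWithinAt (fun x' : ℝ => (t, x')) ((0:ℝ), (1:ℝ)) univ x :=
      ((hasDerivAt_const x t).prodMk (hasDerivAt_id x)).hasDerivWithinAt
    have hmaps : MapsTo (fun x' : ℝ => (t, x')) univ s := fun a _ => ⟨ht, mem_univ _⟩
    have hcomp := hFd.comp_hasDerivWithinAt x hι hmaps
    rw [hasDerivWithinAt_univ] at hcomp
    exact hcomp

lemma burgers_char (hw : IsBurgersSol wm wp w) {t : ℝ} (ht : 0 ≤ t) (y : ℝ) :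
    w t (y + t * burgersInit wm wp y) = burgersInit wm wp y := by
  set F : ℝ × ℝ → ℝ := fun q => w q.1 q.2 with hFdef
  set s : Set (ℝ × ℝ) := Ici (0:ℝ) ×ˢ univ with hsdef
  have hsu : UniqueDiffOn ℝ s := (uniqueDiffOn_Ici 0).prod uniqueDiffOn_univ
  set c : ℝ := burgersInit wm wp y with hcdef
  set γ : ℝ → ℝ × ℝ := fun t' => (t', y + t' * c) with hγdef
  set φ : ℝ → ℝ := fun t' => w t' (y + t' * c) with hφdef
  set L : ℝ → ℝ × ℝ →L[ℝ] ℝ := fun t' => fderivWithin ℝ F s (γ t') with hLdef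
  have hpde : ∀ t' : ℝ, 0 ≤ t' → L t' (1, 0) = -(φ t' * L t' (0, 1)) := by
    intro t' ht'
    have hp := burgers_partials hw ht' (y + t' * c)
    have h1 : derivWithin (fun s' => w s' (y + t' * c)) (Ici 0) t' = L t' (1, 0) :=
      hp.1.derivWithin (uniqueDiffOn_Ici 0 t' ht')
    have h2 : deriv (w t') (y + t' * c) = L t' (0, 1) := hp.2.deriv
    have h3 := hw.eq t' ht' (y + t' * c)
    rw [h1, h2] at h3
    simp only [hφdef]
    linarith
  have hφd : ∀ t' : ℝ, 0 ≤ t' →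
      HasDerivWithinAt φ ((c - φ t') * L t' (0, 1)) (Ici 0) t' := by
    intro t' ht'
    have hγd : HasDerivWithinAt γ ((1:ℝ), c) (Ici 0) t' := by
      have h2 : HasDerivAt (fun u : ℝ => y + u * c) c t' := by
        simpa using ((hasDerivAt_id t').mul_const c).const_add y
      exact ((hasDerivAt_id t').prodMk h2).hasDerivWithinAt
    have hmaps : MapsTo γ (Ici 0) s := fun a ha => ⟨ha, mem_univ _⟩
    have hqmem : γ t' ∈ s := ⟨ht', mem_univ _⟩
    have hFd : HasFDerivWithinAt F (L t') s (γ t') :=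
      ((hw.smooth.differentiableOn (by simp)) _ hqmem).hasFDerivWithinAt
    have hcomp := hFd.comp_hasDerivWithinAt t' hγd hmaps
    have hvec : ((1:ℝ), c) = ((1:ℝ), (0:ℝ)) + c • ((0:ℝ), (1:ℝ)) := by
      simp [Prod.ext_iff]
    rw [hvec, map_add, _root_.map_smul, hpde t' ht'] at hcomp
    have hlin : -(φ t' * L t' (0, 1)) + c • L t' (0, 1) = (c - φ t') * L t' (0, 1) := by
      simp only [smul_eq_mul]; ring
    rwa [hlin] at hcomp
  have hφc : ContinuousOn φ (Ici 0) := by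
    have hγc : Continuous γ := by fun_prop
    have hmaps : MapsTo γ (Ici 0) s := fun a ha => ⟨ha, mem_univ _⟩
    exact (hw.smooth.continuousOn).comp hγc.continuousOn hmaps
  have hLc : ContinuousOn (fun t' => L t' (0, 1)) (Ici 0) := by
    have h1 : ContinuousOn (fderivWithin ℝ F s) s :=
      hw.smooth.continuousOn_fderivWithin hsu (by simp)
    have hγc : Continuous γ := by fun_prop
    have hmaps : MapsTo γ (Ici 0) s := fun a ha => ⟨ha, mem_univ _⟩
    have h2 : ContinuousOn (fun t' => fderivWithin ℝ F s (γ t')) (Ici 0) :=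
      h1.comp hγc.continuousOn hmaps
    exact (ContinuousLinearMap.apply ℝ ℝ ((0:ℝ), (1:ℝ))).continuous.comp_continuousOn h2
  obtain ⟨K, hK⟩ := (isCompact_Icc (a := (0:ℝ)) (b := t)).exists_bound_of_continuousOn
    (hLc.mono Icc_subset_Ici_self)
  have hf0 : φ 0 = c := by
    simp only [hφdef]
    simpa using hw.init y
  have key : ∀ x ∈ Icc (0:ℝ) t, ‖φ x - c‖ ≤ gronwallBound 0 K 0 (x - 0) := by
    apply norm_le_gronwallBound_of_norm_deriv_right_le
    · exact (hφc.mono Icc_subset_Ici_self).sub continuousOn_const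
    · intro x hx
      exact (((hφd x hx.1).sub_const c).mono (Ici_subset_Ici.2 hx.1))
    · simp [hf0]
    · intro x hx
      have h1 : ‖(c - φ x) * L x (0, 1)‖ = ‖L x (0,1)‖ * ‖φ x - c‖ := by
        rw [norm_mul, mul_comm]
        congr 1
        rw [norm_sub_rev]
      rw [h1]
      have h2 := hK x ⟨hx.1, hx.2.le⟩
      have h3 : (0:ℝ) ≤ ‖φ x - c‖ := norm_nonneg _
      nlinarith
  have hkey := key t ⟨ht, le_refl t⟩
  rw [gronwallBound_ε0_δ0] at hkey
  have hzero : ‖φ t - c‖ = 0 := le_antisymm hkey (norm_nonneg _)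
  rw [norm_eq_zero, sub_eq_zero] at hzero
  exact hzero

lemma char_surj (h : wm < wp) {t : ℝ} (ht : 0 ≤ t) (x : ℝ) :
    ∃ y : ℝ, y + t * burgersInit wm wp y = x := by
  set Y : ℝ → ℝ := fun y => y + t * burgersInit wm wp y with hY
  have hc : Continuous Y := continuous_id.add (continuous_const.mul w0_cont)
  have ha : Y (x - t * wp) ≤ x := by
    have := (w0_mem h (x - t * wp)).2
    simp only [hY]
    nlinarith
  have hb : x ≤ Y (x - t * wm) := by
    have := (w0_mem h (x - t * wm)).1
    simp only [hY]
    nlinarith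
  have hab : x - t * wp ≤ x - t * wm := by nlinarith
  obtain ⟨y, _, hy⟩ := intermediate_value_Icc hab hc.continuousOn ⟨ha, hb⟩
  exact ⟨y, hy⟩

lemma w_mem (h : wm < wp) (hw : IsBurgersSol wm wp w) {t : ℝ} (ht : 0 ≤ t) (x : ℝ) :
    w t x ∈ Set.Icc wm wp := by
  obtain ⟨y, hy⟩ := char_surj h ht x
  rw [← hy, burgers_char hw ht]
  exact w0_mem h y

lemma w_two_point (h : wm < wp) (hw : IsBurgersSol wm wp w) {t : ℝ} (ht : 0 < t)
    {x1 x2 : ℝ} (hx : x1 ≤ x2) :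
    0 ≤ w t x2 - w t x1 ∧
      w t x2 - w t x1 ≤ min ((wp - wm) / 2) (1 / t) * (x2 - x1) := by
  obtain ⟨y1, hy1⟩ := char_surj h ht.le x1
  obtain ⟨y2, hy2⟩ := char_surj h ht.le x2
  have hv1 : w t x1 = burgersInit wm wp y1 := by rw [← hy1, burgers_char hw ht.le]
  have hv2 : w t x2 = burgersInit wm wp y2 := by rw [← hy2, burgers_char hw ht.le]
  have hyy : y1 ≤ y2 := by
    by_contra hcon
    push_neg at hcon
    have hm := w0_mono h hcon.le
    have : x2 < x1 := by
      rw [← hy1, ← hy2]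
      nlinarith
    linarith
  have hA0 : 0 ≤ burgersInit wm wp y2 - burgersInit wm wp y1 := by
    have := w0_mono h hyy; linarith
  set A := burgersInit wm wp y2 - burgersInit wm wp y1 with hAdef
  have hΔ : x2 - x1 = (y2 - y1) + t * A := by
    rw [← hy1, ← hy2]; simp only [hAdef]; ring
  refine ⟨by rw [hv1, hv2]; exact hA0, ?_⟩
  have hlip := w0_lip h hyy
  have hb1 : A ≤ (wp - wm) / 2 * (x2 - x1) := by
    have hd : 0 ≤ (wp - wm) / 2 := by linarith
    nlinarith [mul_nonneg hd (mul_nonneg ht.le hA0)]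
  have hb2 : A ≤ 1 / t * (x2 - x1) := by
    rw [div_mul_eq_mul_div, le_div_iff₀ ht]
    nlinarith
  rw [hv1, hv2, ← hAdef]
  rcases min_cases ((wp - wm) / 2) (1 / t) with ⟨hmin, _⟩ | ⟨hmin, _⟩ <;> rw [hmin]
  · exact hb1
  · exact hb2

lemma w_slice_smooth (hw : IsBurgersSol wm wp w) {t : ℝ} (ht : 0 < t) :
    ContDiff ℝ (⊤ : ℕ∞) (w t) := by
  rw [contDiff_iff_contDiffAt]
  intro x
  have hmem : (Ici (0:ℝ) ×ˢ (univ : Set ℝ)) ∈ nhds (t, x) := by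
    apply Filter.mem_of_superset ((isOpen_Ioi.prod isOpen_univ).mem_nhds
      (Set.mk_mem_prod ht (mem_univ x)))
    exact prod_mono Ioi_subset_Ici_self subset_rfl
  have hF : ContDiffAt ℝ (⊤ : ℕ∞) (fun q : ℝ × ℝ => w q.1 q.2) (t, x) :=
    hw.smooth.contDiffAt hmem
  have hι : ContDiffAt ℝ (⊤ : ℕ∞) (fun x' : ℝ => ((t : ℝ), x')) x :=
    (contDiff_const.prodMk contDiff_id).contDiffAt
  exact hF.comp x hι

lemma deriv_bounds_of_two_point {f : ℝ → ℝ} {M : ℝ} (hf : Differentiable ℝ f)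
    (hb : ∀ x1 x2 : ℝ, x1 ≤ x2 → 0 ≤ f x2 - f x1 ∧ f x2 - f x1 ≤ M * (x2 - x1)) (x : ℝ) :
    0 ≤ deriv f x ∧ deriv f x ≤ M := by
  have hd := (hf x).hasDerivAt
  rw [hasDerivAt_iff_tendsto_slope] at hd
  have hd' : Tendsto (slope f x) (nhdsWithin x (Ioi x)) (nhds (deriv f x)) :=
    hd.mono_left (nhdsWithin_mono x (fun z hz => ne_of_gt hz))
  have hmem : ∀ᶠ z in nhdsWithin x (Ioi x), z ∈ Ioi x := self_mem_nhdsWithin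
  constructor
  · refine ge_of_tendsto hd' (hmem.mono fun z hz => ?_)
    rw [slope_def_field]
    have h1 := (hb x z (le_of_lt hz)).1
    have h2 : (0:ℝ) < z - x := sub_pos.2 hz
    positivity
  · refine le_of_tendsto hd' (hmem.mono fun z hz => ?_)
    rw [slope_def_field]
    have h1 := (hb x z (le_of_lt hz)).2
    have h2 : (0:ℝ) < z - x := sub_pos.2 hz
    rw [div_le_iff₀ h2]
    linarith

lemma lintegral_deriv_le {g f : ℝ → ℝ} (hg : ∀ x, HasDerivAt g (f x) x)
    (hc : Continuous f) (hnn : ∀ x, 0 ≤ f x) {B : ℝ}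
    (hbound : ∀ a b : ℝ, a ≤ b → g b - g a ≤ B) :
    ∫⁻ x, ENNReal.ofReal (f x) ≤ ENNReal.ofReal B := by
  set G : ℕ → ℝ → ℝ≥0∞ := fun n =>
    (Icc (-(n:ℝ)) n).indicator (fun x => ENNReal.ofReal (f x)) with hGdef
  have hmeas : ∀ n, Measurable (G n) :=
    fun n => (ENNReal.measurable_ofReal.comp hc.measurable).indicator measurableSet_Icc
  have hmono : Monotone G := by
    intro n m hnm
    apply Set.indicator_le_indicator_of_subset
    · exact Icc_subset_Icc (by simp [neg_le_neg_iff, Nat.cast_le.2 hnm]) (Nat.cast_le.2 hnm)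
    · intro x; exact zero_le
  have hsup : ∀ x, (⨆ n, G n x) = ENNReal.ofReal (f x) := by
    intro x
    obtain ⟨n, hn⟩ := exists_nat_ge |x|
    apply le_antisymm
    · exact iSup_le fun m => Set.indicator_le_self _ _ x
    · refine le_iSup_of_le n ?_
      rw [hGdef]
      have hx : x ∈ Icc (-(n:ℝ)) n := by
        rw [abs_le] at hn
        exact ⟨by linarith [hn.1], hn.2⟩
      simp [Set.indicator_of_mem hx]
  have hstep : ∀ n : ℕ, ∫⁻ x, G n x ≤ ENNReal.ofReal B := by
    intro n
    rw [hGdef]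
    simp only []
    rw [lintegral_indicator measurableSet_Icc (fun x => ENNReal.ofReal (f x))]
    have hint : IntegrableOn f (Icc (-(n:ℝ)) n) := hc.integrableOn_Icc
    rw [← MeasureTheory.ofReal_integral_eq_lintegral_ofReal hint
      (Filter.Eventually.of_forall fun x => hnn x)]
    apply ENNReal.ofReal_le_ofReal
    have hab : (-(n:ℝ)) ≤ n := by simp
    have hftc : ∫ x in (-(n:ℝ))..n, f x = g n - g (-(n:ℝ)) := by
      apply intervalIntegral.integral_eq_sub_of_hasDerivAt
      · intro x _; exact hg x
      · exact hc.intervalIntegrable _ _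
    rw [MeasureTheory.integral_Icc_eq_integral_Ioc, ← intervalIntegral.integral_of_le hab, hftc]
    exact hbound _ _ hab
  calc ∫⁻ x, ENNReal.ofReal (f x) = ∫⁻ x, ⨆ n, G n x := by
        apply lintegral_congr; intro x; rw [hsup]
    _ = ⨆ n, ∫⁻ x, G n x := lintegral_iSup hmeas hmono
    _ ≤ ENNReal.ofReal B := iSup_le hstep

lemma eLpNorm_le_of_bounds {f : ℝ → ℝ} {M B : ℝ} (hM : 0 ≤ M) (hB : 0 ≤ B)
    (hnn : ∀ x, 0 ≤ f x) (hfM : ∀ x, f x ≤ M)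
    (hint : ∫⁻ x, ENNReal.ofReal (f x) ≤ ENNReal.ofReal B)
    {p : ℝ≥0∞} (hp : 1 ≤ p) (hptop : p ≠ ⊤) :
    eLpNorm f p volume ≤
      ENNReal.ofReal (M ^ (1 - 1 / p.toReal) * B ^ (1 / p.toReal)) := by
  set r : ℝ := p.toReal with hrdef
  have hr1 : 1 ≤ r := by
    have := ENNReal.toReal_mono hptop hp
    simpa using this
  have hr0 : 0 < r := lt_of_lt_of_le one_pos hr1
  have hp0 : p ≠ 0 := by
    intro hc; rw [hc] at hp; exact absurd hp (by simp)
  rw [eLpNorm_eq_lintegral_rpow_enorm_toReal hp0 hptop]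
  have hpt : ∀ x : ℝ, (‖f x‖₊ : ℝ≥0∞) ^ r ≤
      ENNReal.ofReal (M ^ (r - 1)) * ENNReal.ofReal (f x) := by
    intro x
    rw [← enorm_eq_nnnorm, Real.enorm_eq_ofReal (hnn x), ENNReal.ofReal_rpow_of_nonneg (hnn x) hr0.le,
      ← ENNReal.ofReal_mul (by positivity)]
    apply ENNReal.ofReal_le_ofReal
    rcases eq_or_lt_of_le (hnn x) with hfx | hfx
    · rw [← hfx, Real.zero_rpow hr0.ne']
      positivity
    · have h1 : f x ^ r = f x ^ (r - 1) * f x := by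
        rw [Real.rpow_sub hfx, Real.rpow_one]
        field_simp
      rw [h1]
      have h2 : f x ^ (r - 1) ≤ M ^ (r - 1) :=
        Real.rpow_le_rpow (hnn x) (hfM x) (by linarith)
      exact mul_le_mul_of_nonneg_right h2 (hnn x)
  calc (∫⁻ x, (‖f x‖₊ : ℝ≥0∞) ^ r) ^ (1 / r)
      ≤ (∫⁻ x, ENNReal.ofReal (M ^ (r - 1)) * ENNReal.ofReal (f x)) ^ (1 / r) :=
        ENNReal.rpow_le_rpow (lintegral_mono hpt) (by positivity)
    _ = (ENNReal.ofReal (M ^ (r - 1)) * ∫⁻ x, ENNReal.ofReal (f x)) ^ (1 / r) := by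
        rw [lintegral_const_mul' _ _ ENNReal.ofReal_ne_top]
    _ ≤ (ENNReal.ofReal (M ^ (r - 1)) * ENNReal.ofReal B) ^ (1 / r) :=
        ENNReal.rpow_le_rpow (mul_le_mul_right hint _) (by positivity)
    _ = ENNReal.ofReal ((M ^ (r - 1) * B) ^ (1 / r)) := by
        rw [← ENNReal.ofReal_mul (by positivity),
          ENNReal.ofReal_rpow_of_nonneg (by positivity) (by positivity)]
    _ = ENNReal.ofReal (M ^ (1 - 1 / r) * B ^ (1 / r)) := by
        congr 1
        rw [Real.mul_rpow (by positivity) hB, ← Real.rpow_mul hM]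
        congr 2
        field_simp

end BurgersLpAux


open BurgersLpAux in
/-- first derivative `L^p` decay estimate for the Burgers solution. -/
theorem burgers_first_derivative_Lp_decay (wm wp : ℝ) (h : wm < wp) :
    ∃ C : ℝ, 0 < C ∧
      ∀ w : ℝ → ℝ → ℝ, IsBurgersSol wm wp w →
        ∀ t : ℝ, 0 < t → ∀ p : ℝ≥0∞, 1 ≤ p →
          eLpNorm (fun x => deriv (w t) x) p volume ≤
            ENNReal.ofReal (C * min (wp - wm)
              ((wp - wm) ^ (1 / p.toReal) * t ^ (-1 + 1 / p.toReal))) := by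
  refine ⟨1, one_pos, ?_⟩
  intro w hw t ht p hp
  have hw0 : (0:ℝ) < wp - wm := sub_pos.2 h
  have hM0 : (0:ℝ) < min ((wp - wm) / 2) (1 / t) := lt_min (by linarith) (by positivity)
  have hsm := w_slice_smooth hw ht
  have hdiff : Differentiable ℝ (w t) := hsm.differentiable (by simp)
  have hder := fun x => deriv_bounds_of_two_point hdiff
    (fun x1 x2 hx => w_two_point h hw ht hx) x
  rcases eq_or_ne p ⊤ with hp' | hp'
  · subst hp'
    have h1 : eLpNorm (fun x => deriv (w t) x) ⊤ volume ≤
        ENNReal.ofReal (min ((wp - wm) / 2) (1 / t)) := by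
      rw [eLpNorm_exponent_top]
      apply eLpNormEssSup_le_of_ae_bound (C := min ((wp - wm) / 2) (1 / t))
      filter_upwards with x
      rw [Real.norm_eq_abs, abs_of_nonneg (hder x).1]
      exact (hder x).2
    refine h1.trans (ENNReal.ofReal_le_ofReal ?_)
    have he : (-1 : ℝ) + 1 / (⊤ : ℝ≥0∞).toReal = -1 := by simp
    have he2 : (1 : ℝ) / (⊤ : ℝ≥0∞).toReal = 0 := by simp
    rw [he, he2, Real.rpow_zero, Real.rpow_neg_one, one_mul, one_mul]
    exact min_le_min (by linarith) (le_of_eq (one_div t))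
  · have hbound : ∀ a b : ℝ, a ≤ b → w t b - w t a ≤ wp - wm := by
      intro a b hab
      have h1 := (w_mem h hw ht.le b).2
      have h2 := (w_mem h hw ht.le a).1
      linarith
    have hint := lintegral_deriv_le (fun x => (hdiff x).hasDerivAt)
      (hsm.continuous_deriv (by simp)) (fun x => (hder x).1) hbound
    have key := eLpNorm_le_of_bounds hM0.le hw0.le (fun x => (hder x).1)
      (fun x => (hder x).2) hint hp hp'
    refine key.trans (ENNReal.ofReal_le_ofReal ?_)
    set r : ℝ := p.toReal with hrdef
    have hr1 : 1 ≤ r := by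
      have := ENNReal.toReal_mono hp' hp
      simpa using this
    have hr0 : 0 < r := lt_of_lt_of_le one_pos hr1
    have he0 : 0 ≤ 1 - 1 / r := by
      have : 1 / r ≤ 1 := by
        rw [div_le_one hr0]; exact hr1
      linarith
    have hi0 : 0 ≤ 1 / r := by positivity
    rw [one_mul]
    apply le_min
    · have h1 : min ((wp - wm) / 2) (1 / t) ^ (1 - 1 / r) ≤ (wp - wm) ^ (1 - 1 / r) :=
        Real.rpow_le_rpow hM0.le ((min_le_left _ _).trans (by linarith)) he0
      calc min ((wp - wm) / 2) (1 / t) ^ (1 - 1 / r) * (wp - wm) ^ (1 / r)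
          ≤ (wp - wm) ^ (1 - 1 / r) * (wp - wm) ^ (1 / r) :=
            mul_le_mul_of_nonneg_right h1 (by positivity)
        _ = wp - wm := by
            rw [← Real.rpow_add hw0]
            norm_num
    · have h1 : min ((wp - wm) / 2) (1 / t) ^ (1 - 1 / r) ≤ (1 / t) ^ (1 - 1 / r) :=
        Real.rpow_le_rpow hM0.le (min_le_right _ _) he0
      have h2 : (1 / t) ^ (1 - 1 / r) = t ^ (-1 + 1 / r) := by
        rw [one_div, ← Real.rpow_neg_one t, ← Real.rpow_mul ht.le]
        congr 1
        ring
      calc min ((wp - wm) / 2) (1 / t) ^ (1 - 1 / r) * (wp - wm) ^ (1 / r)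
          ≤ (1 / t) ^ (1 - 1 / r) * (wp - wm) ^ (1 / r) :=
            mul_le_mul_of_nonneg_right h1 (by positivity)
        _ = (wp - wm) ^ (1 / r) * t ^ (-1 + 1 / r) := by
            rw [h2]; ring


end
end

section
/- The unique global smooth solution w(t,x) of the Burgers Cauchy problem converges uniformly in x to the rarefaction fan: lim_{t→+∞} sup_{x∈ℝ} | w(t,x) − w^r(x/t) | = 0. -/
open MeasureTheory Set Filter
open scoped ENNReal

noncomputable section

/-! ### Auxiliary lemmas for the proof of `burgers_tendsto_rarefactionFan` -/

section BurgersAux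

open Real Filter Set

lemma aux_tanh_formula (x : ℝ) : Real.tanh x = 1 - 2 / (Real.exp (2*x) + 1) := by
  rw [Real.tanh_eq_sinh_div_cosh, Real.sinh_eq, Real.cosh_eq, two_mul, Real.exp_add,
    Real.exp_neg]
  have h := Real.exp_pos x
  field_simp
  ring

lemma aux_tanh_lt_one (x : ℝ) : Real.tanh x < 1 := by
  rw [aux_tanh_formula]
  have h : (0:ℝ) < Real.exp (2*x) + 1 := by positivity
  have : 0 < 2 / (Real.exp (2*x) + 1) := by positivity
  linarith

lemma aux_neg_one_lt_tanh (x : ℝ) : -1 < Real.tanh x := by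
  rw [aux_tanh_formula]
  have h : (0:ℝ) < Real.exp (2*x) := Real.exp_pos _
  have h2 : 2 / (Real.exp (2*x) + 1) < 2 := by
    rw [div_lt_iff₀ (by linarith)]; nlinarith
  linarith

lemma aux_tanh_mono : Monotone Real.tanh := by
  intro a b hab
  rw [aux_tanh_formula, aux_tanh_formula]
  have ha : (0:ℝ) < Real.exp (2*a) + 1 := by positivity
  have hb : (0:ℝ) < Real.exp (2*b) + 1 := by positivity
  have : Real.exp (2*a) ≤ Real.exp (2*b) := Real.exp_le_exp.2 (by linarith)
  have h2 : 2 / (Real.exp (2*b) + 1) ≤ 2 / (Real.exp (2*a) + 1) :=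
    div_le_div_of_nonneg_left (by norm_num) ha (by linarith)
  linarith

lemma aux_tendsto_tanh : Tendsto Real.tanh atTop (nhds 1) := by
  have h : Tendsto (fun x : ℝ => 1 - 2 / (Real.exp (2*x) + 1)) atTop (nhds (1 - 0)) := by
    apply Tendsto.sub tendsto_const_nhds
    apply Tendsto.div_atTop tendsto_const_nhds
    apply Tendsto.atTop_add _ tendsto_const_nhds
    exact Real.tendsto_exp_atTop.comp (tendsto_id.const_mul_atTop (by norm_num))
  simpa [funext aux_tanh_formula] using h

variable {wm wp : ℝ} {w : ℝ → ℝ → ℝ}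

/-- The time-space domain. -/
def SB : Set (ℝ × ℝ) := (Set.Ici (0:ℝ)) ×ˢ (Set.univ : Set ℝ)

lemma aux_smoothSB (hw : IsBurgersSol wm wp w) :
    ContDiffOn ℝ (⊤ : ℕ∞) (fun q : ℝ × ℝ => w q.1 q.2) SB := hw.smooth

lemma aux_hUD : UniqueDiffOn ℝ SB :=
  (uniqueDiffOn_Ici 0).prod uniqueDiffOn_univ

lemma aux_pd_x (hw : IsBurgersSol wm wp w) {s : ℝ} (hs : 0 ≤ s) (x : ℝ) :
    HasDerivAt (w s)
      ((fderivWithin ℝ (fun q : ℝ × ℝ => w q.1 q.2) SB (s, x)) (0, 1)) x := by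
  have hpS : (s, x) ∈ SB := ⟨hs, mem_univ x⟩
  have hF := (((aux_smoothSB hw).differentiableOn (by simp)) (s, x) hpS).hasFDerivWithinAt
  have hγ : HasDerivAt (fun x' : ℝ => (s, x')) ((0 : ℝ), (1 : ℝ)) x :=
    HasDerivAt.prodMk (hasDerivAt_const x s) (hasDerivAt_id x)
  have := hF.comp_hasDerivWithinAt x (hγ.hasDerivWithinAt (s := univ))
    (fun x' _ => ⟨hs, mem_univ x'⟩)
  have h2 : HasDerivWithinAt (w s)
      ((fderivWithin ℝ (fun q : ℝ × ℝ => w q.1 q.2) SB (s, x)) (0, 1)) univ x := this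
  rw [hasDerivWithinAt_univ] at h2
  exact h2

lemma aux_pd_t (hw : IsBurgersSol wm wp w) {s : ℝ} (hs : 0 ≤ s) (x : ℝ) :
    HasDerivWithinAt (fun s' => w s' x)
      ((fderivWithin ℝ (fun q : ℝ × ℝ => w q.1 q.2) SB (s, x)) (1, 0)) (Ici 0) s := by
  have hpS : (s, x) ∈ SB := ⟨hs, mem_univ x⟩
  have hF := (((aux_smoothSB hw).differentiableOn (by simp)) (s, x) hpS).hasFDerivWithinAt
  have hγ : HasDerivAt (fun s' : ℝ => (s', x)) ((1 : ℝ), (0 : ℝ)) s :=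
    HasDerivAt.prodMk (hasDerivAt_id s) (hasDerivAt_const s x)
  exact hF.comp_hasDerivWithinAt s (hγ.hasDerivWithinAt (s := Ici 0))
    (fun s' (hs' : s' ∈ Ici (0:ℝ)) => (⟨hs', mem_univ x⟩ : (s', x) ∈ SB))

lemma aux_line_deriv (hw : IsBurgersSol wm wp w) {s : ℝ} (hs : 0 ≤ s) (y c : ℝ) :
    HasDerivWithinAt (fun s' => w s' (y + s' * c))
      (derivWithin (fun s' => w s' (y + s * c)) (Ici 0) s
        + c * deriv (w s) (y + s * c)) (Ici 0) s := by
  set x := y + s * c with hx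
  have hpS : (s, x) ∈ SB := ⟨hs, mem_univ x⟩
  have hF := (((aux_smoothSB hw).differentiableOn (by simp)) (s, x) hpS).hasFDerivWithinAt
  set L := fderivWithin ℝ (fun q : ℝ × ℝ => w q.1 q.2) SB (s, x) with hL
  have hγ : HasDerivAt (fun s' : ℝ => (s', y + s' * c)) ((1 : ℝ), c) s := by
    have := HasDerivAt.prodMk (hasDerivAt_id s) (((hasDerivAt_id s).mul_const c).const_add y)
    simpa using this
  have hcomp : HasDerivWithinAt (fun s' => w s' (y + s' * c)) (L (1, c)) (Ici 0) s :=
    hF.comp_hasDerivWithinAt_of_eq s (hγ.hasDerivWithinAt (s := Ici 0)) (fun s' (hs' : s' ∈ Ici (0:ℝ)) => (⟨hs', mem_univ _⟩ : (s', y + s' * c) ∈ SB)) rfl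
  have hsplit : L (1, c) = L (1, 0) + c * L (0, 1) := by
    have h1 : ((1 : ℝ), c) = (1, 0) + c • ((0 : ℝ), (1 : ℝ)) := by
      simp [Prod.ext_iff]
    rw [h1, map_add, _root_.map_smul, smul_eq_mul]
  have ht : derivWithin (fun s' => w s' x) (Ici 0) s = L (1, 0) :=
    (aux_pd_t hw hs x).derivWithin (uniqueDiffOn_Ici 0 s hs)
  have hxd : deriv (w s) x = L (0, 1) := (aux_pd_x hw hs x).deriv
  rw [ht, hxd, ← hsplit]
  exact hcomp

/-- Characteristic identity: `w` is constant along characteristics. -/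
lemma aux_char (hw : IsBurgersSol wm wp w) {b : ℝ} (hb : 0 ≤ b) (y : ℝ) :
    w b (y + b * burgersInit wm wp y) = burgersInit wm wp y := by
  set c := burgersInit wm wp y with hc
  set g : ℝ → ℝ := fun s => w s (y + s * c) - c with hg
  set γ : ℝ → ℝ × ℝ := fun s => (s, y + s * c) with hγdef
  have hγc : Continuous γ := by fun_prop
  have hγmaps : ∀ s ∈ Icc (0:ℝ) b, γ s ∈ SB := fun s hs => ⟨hs.1, mem_univ _⟩
  have hFc : ContinuousOn (fun q : ℝ × ℝ => w q.1 q.2) SB := (aux_smoothSB hw).continuousOn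
  have hgc : ContinuousOn g (Icc 0 b) := by
    have : ContinuousOn (fun s => w s (y + s * c)) (Icc 0 b) :=
      hFc.comp hγc.continuousOn hγmaps
    exact this.sub continuousOn_const
  obtain ⟨C, hC⟩ : ∃ C, ∀ s ∈ Icc (0:ℝ) b, ‖deriv (w s) (y + s * c)‖ ≤ C := by
    have hfd : ContinuousOn (fderivWithin ℝ (fun q : ℝ × ℝ => w q.1 q.2) SB) SB :=
      (aux_smoothSB hw).continuousOn_fderivWithin aux_hUD (by simp)
    have hcont : ContinuousOn
        (fun s => (fderivWithin ℝ (fun q : ℝ × ℝ => w q.1 q.2) SB (γ s)) ((0:ℝ), (1:ℝ)))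
        (Icc 0 b) :=
      (hfd.comp hγc.continuousOn hγmaps).clm_apply continuousOn_const
    obtain ⟨C, hC⟩ := isCompact_Icc.exists_bound_of_continuousOn hcont
    refine ⟨C, fun s hs => ?_⟩
    have := (aux_pd_x hw hs.1 (y + s * c)).deriv
    rw [this]
    exact hC s hs
  have hC0 : 0 ≤ C := le_trans (norm_nonneg _) (hC 0 ⟨le_refl 0, hb⟩)
  have key := norm_le_gronwallBound_of_norm_deriv_right_le (δ := 0) (K := C) (ε := 0)
    (f := g) (f' := fun s => (c - w s (y + s * c)) * deriv (w s) (y + s * c))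
    (a := 0) (b := b) hgc ?_ ?_ ?_
  · have := key b ⟨hb, le_refl b⟩
    rw [gronwallBound_ε0] at this
    simp only [zero_mul] at this
    have : ‖g b‖ ≤ 0 := by simpa using this
    have : g b = 0 := norm_le_zero_iff.mp this
    have h2 : w b (y + b * c) - c = 0 := this
    linarith
  · intro t ht
    have ht0 : 0 ≤ t := ht.1
    have hline := aux_line_deriv hw ht0 y c
    have hpde := hw.eq t ht0 (y + t * c)
    have hwt : derivWithin (fun s' => w s' (y + t * c)) (Ici 0) t
        = - (w t (y + t * c) * deriv (w t) (y + t * c)) := by linarith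
    rw [hwt] at hline
    have hline2 : HasDerivWithinAt (fun s' => w s' (y + s' * c))
        ((c - w t (y + t * c)) * deriv (w t) (y + t * c)) (Ici 0) t := by
      convert hline using 1; ring
    exact (hline2.sub_const c).mono (Ici_subset_Ici.mpr ht0)
  · simp [hg, hw.init y, hc]
  · intro t ht
    have htIcc : t ∈ Icc (0:ℝ) b := ⟨ht.1, le_of_lt ht.2⟩
    have h1 : ‖(c - w t (y + t * c)) * deriv (w t) (y + t * c)‖
        = ‖g t‖ * ‖deriv (w t) (y + t * c)‖ := by
      rw [norm_mul]
      congr 1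
      simp only [hg]
      rw [Real.norm_eq_abs, Real.norm_eq_abs, abs_sub_comm]
    rw [h1, add_zero, mul_comm C]
    exact mul_le_mul_of_nonneg_left (hC t htIcc) (norm_nonneg _)

lemma aux_init_gt (h : wm < wp) (y : ℝ) : wm < burgersInit wm wp y := by
  have h1 := aux_neg_one_lt_tanh y
  unfold burgersInit; nlinarith

lemma aux_init_lt (h : wm < wp) (y : ℝ) : burgersInit wm wp y < wp := by
  have h2 := aux_tanh_lt_one y
  unfold burgersInit; nlinarith

lemma aux_init_mono (h : wm < wp) : Monotone (burgersInit wm wp) := by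
  intro a b hab
  unfold burgersInit
  have := aux_tanh_mono hab
  nlinarith

/-- Every point is reached by a characteristic. -/
lemma aux_surj (h : wm < wp) {t : ℝ} (ht : 0 ≤ t) (x : ℝ) :
    ∃ y, y + t * burgersInit wm wp y = x := by
  set Φ : ℝ → ℝ := fun y => y + t * burgersInit wm wp y with hΦ
  have hcont : Continuous Φ := by
    apply continuous_id.add
    apply continuous_const.mul
    apply continuous_const.add
    apply continuous_const.mul
    have : Real.tanh = fun x => 1 - 2 / (Real.exp (2*x) + 1) := funext aux_tanh_formula
    rw [this]
    apply continuous_const.sub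
    apply Continuous.div continuous_const (by fun_prop)
    intro x
    positivity
  set y1 := x - t * wp - 1 with hy1
  set y2 := x - t * wm + 1 with hy2
  have h12 : y1 ≤ y2 := by
    have : t * wm ≤ t * wp := mul_le_mul_of_nonneg_left (le_of_lt h) ht
    simp only [hy1, hy2]; linarith
  have hΦ1 : Φ y1 ≤ x := by
    have := aux_init_lt h y1
    have : t * burgersInit wm wp y1 ≤ t * wp :=
      mul_le_mul_of_nonneg_left (le_of_lt this) ht
    simp only [hΦ, hy1]; linarith
  have hΦ2 : x ≤ Φ y2 := by
    have := aux_init_gt h y2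
    have : t * wm ≤ t * burgersInit wm wp y2 :=
      mul_le_mul_of_nonneg_left (le_of_lt this) ht
    simp only [hΦ, hy2]; linarith
  have := intermediate_value_Icc h12 hcont.continuousOn
  obtain ⟨y, _, hy⟩ := this ⟨hΦ1, hΦ2⟩
  exact ⟨y, hy⟩

/-- The key quantitative estimate. -/
lemma aux_estimate (h : wm < wp) {t M : ℝ} (ht : 1 ≤ t) (hM : 0 < M) (y : ℝ) :
    |burgersInit wm wp y - rarefactionFan wm wp ((y + t * burgersInit wm wp y) / t)|
      ≤ M / t + (wp - wm) * (1 - Real.tanh M) := by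
  have ht0 : (0:ℝ) < t := lt_of_lt_of_le one_pos ht
  set a := burgersInit wm wp y with ha
  set ξ := (y + t * a) / t with hξdef
  have hξ : ξ = y / t + a := by rw [hξdef, add_div, mul_div_cancel_left₀ _ (ne_of_gt ht0)]
  have ham : wm < a := aux_init_gt h y
  have hap : a < wp := aux_init_lt h y
  have htM : Real.tanh M < 1 := aux_tanh_lt_one M
  have hB2 : 0 ≤ (wp - wm) * (1 - Real.tanh M) := by nlinarith
  have hMt : 0 < M / t := div_pos hM ht0
  have hwM : burgersInit wm wp M = (wp + wm) / 2 + (wp - wm) / 2 * Real.tanh M := rfl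
  have hwmM : burgersInit wm wp (-M) = (wp + wm) / 2 - (wp - wm) / 2 * Real.tanh M := by
    unfold burgersInit; rw [Real.tanh_neg]; ring
  unfold rarefactionFan
  split_ifs with h1 h2
  · rw [hξ] at h1
    have habs : |a - wm| = a - wm := abs_of_pos (by linarith)
    rw [habs]
    rcases le_or_gt (-M) y with hy | hy
    · have : -(M/t) ≤ y/t := by
        rw [← neg_div]; exact div_le_div_of_nonneg_right hy ht0.le |>.trans_eq rfl
      linarith
    · have hmono := aux_init_mono h (le_of_lt hy)
      rw [← ha, hwmM] at hmono
      nlinarith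
  · have haξ : a - ξ = -(y/t) := by rw [hξ]; ring
    rcases le_or_gt (|y|) M with hy | hy
    · have h3 := abs_le.mp hy
      have hl : -(M/t) ≤ y/t := by
        rw [← neg_div]; exact div_le_div_of_nonneg_right h3.1 ht0.le
      have hr : y/t ≤ M/t := div_le_div_of_nonneg_right h3.2 ht0.le
      rw [abs_le]
      constructor <;> [skip; skip] <;> rw [haξ] <;> linarith
    · rcases le_or_gt 0 y with hy0 | hy0
      · have hyM : M < y := by rwa [abs_of_nonneg hy0] at hy
        have hmono := aux_init_mono h (le_of_lt hyM)
        rw [← ha, hwM] at hmono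
        have hyt : 0 ≤ y / t := div_nonneg hy0 (le_of_lt ht0)
        have habs : |a - ξ| = ξ - a := by
          rw [abs_of_nonpos (by rw [haξ]; linarith)]; ring
        rw [habs]
        nlinarith
      · have hyM : y < -M := by rw [abs_of_neg hy0] at hy; linarith
        have hmono := aux_init_mono h (le_of_lt hyM)
        rw [← ha, hwmM] at hmono
        have hyt : y / t ≤ 0 := div_nonpos_of_nonpos_of_nonneg (le_of_lt hy0) (le_of_lt ht0)
        have habs : |a - ξ| = a - ξ := abs_of_nonneg (by rw [haξ]; linarith)
        rw [habs, hξ]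
        nlinarith
  · push_neg at h2
    rw [hξ] at h2
    have habs : |a - wp| = wp - a := by rw [abs_of_neg (by linarith)]; ring
    rw [habs]
    rcases le_or_gt y M with hy | hy
    · have : y/t ≤ M/t := div_le_div_of_nonneg_right hy ht0.le
      linarith
    · have hmono := aux_init_mono h (le_of_lt hy)
      rw [← ha, hwM] at hmono
      nlinarith

end BurgersAux

/-- the Burgers solution converges uniformly in `x` to the
rarefaction fan as `t → +∞`. -/
theorem burgers_tendsto_rarefactionFan (wm wp : ℝ) (h : wm < wp)
    (w : ℝ → ℝ → ℝ) (hw : IsBurgersSol wm wp w) :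
    Tendsto (fun t : ℝ => ⨆ x : ℝ, |w t x - rarefactionFan wm wp (x / t)|)
      atTop (nhds 0) := by
  rw [Metric.tendsto_atTop]
  intro ε hε
  -- choose M with (wp - wm) * (1 - tanh M) < ε/2
  obtain ⟨M, hMε, hM0⟩ : ∃ M, (wp - wm) * (1 - Real.tanh M) < ε/2 ∧ 0 < M := by
    have h1 : Tendsto (fun M => (wp - wm) * (1 - Real.tanh M)) atTop
        (nhds ((wp - wm) * (1 - 1))) :=
      tendsto_const_nhds.mul (tendsto_const_nhds.sub aux_tendsto_tanh)
    have h1' : Tendsto (fun M => (wp - wm) * (1 - Real.tanh M)) atTop (nhds 0) := by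
      simpa using h1
    have h2 : ∀ᶠ M in atTop, (wp - wm) * (1 - Real.tanh M) < ε/2 :=
      h1'.eventually (Filter.Tendsto.eventually_lt_const (by linarith) tendsto_id)
    exact ((h2.and (eventually_gt_atTop 0)).exists)
  refine ⟨max 1 (2 * M / ε), fun t htN => ?_⟩
  have ht1 : 1 ≤ t := le_trans (le_max_left _ _) htN
  have ht0 : (0:ℝ) < t := lt_of_lt_of_le one_pos ht1
  have htM : 2 * M / ε ≤ t := le_trans (le_max_right _ _) htN
  have hMt : M / t ≤ ε / 2 := by
    rw [div_le_iff₀ ht0]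
    have := (div_le_iff₀ hε).mp htM
    linarith
  have hbound : ∀ x : ℝ, |w t x - rarefactionFan wm wp (x / t)|
      ≤ M / t + (wp - wm) * (1 - Real.tanh M) := by
    intro x
    obtain ⟨y, hy⟩ := aux_surj h ht0.le x
    have hchar := aux_char hw ht0.le y
    rw [hy] at hchar
    rw [hchar, ← hy]
    exact aux_estimate h ht1 hM0 y
  have hsup_nonneg : 0 ≤ ⨆ x : ℝ, |w t x - rarefactionFan wm wp (x / t)| :=
    Real.iSup_nonneg (fun x => abs_nonneg _)
  have hsup_le : (⨆ x : ℝ, |w t x - rarefactionFan wm wp (x / t)|)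
      ≤ M / t + (wp - wm) * (1 - Real.tanh M) := ciSup_le hbound
  rw [Real.dist_eq, sub_zero, abs_of_nonneg hsup_nonneg]
  calc (⨆ x : ℝ, |w t x - rarefactionFan wm wp (x / t)|)
      ≤ M / t + (wp - wm) * (1 - Real.tanh M) := hsup_le
    _ < ε/2 + ε/2 := by
        apply add_lt_add_of_le_of_lt hMt hMε
    _ = ε := by ring


end
end

section
/- The smooth approximate 2-rarefaction wave converges uniformly to the exact 2-rarefaction wave fan: lim_{t→+∞} sup_{x∈ℝ} | (ρ̄,ū)(t,x) − (ρ^r,u^r)(x/t) | = 0. -/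
open MeasureTheory Set Filter
open scoped ENNReal

noncomputable section

namespace RareAux

open Set

lemma tanh_eq (x : ℝ) : Real.tanh x = 1 - 2 / (Real.exp (2*x) + 1) := by
  have h1 : (0:ℝ) < Real.exp x := Real.exp_pos x
  have h2 : Real.exp (2*x) = Real.exp x * Real.exp x := by
    rw [two_mul, Real.exp_add]
  rw [Real.tanh_eq_sinh_div_cosh, Real.sinh_eq, Real.cosh_eq, h2, Real.exp_neg]
  have h3 : Real.exp x + (Real.exp x)⁻¹ ≠ 0 := by positivity
  have h4 : Real.exp x * Real.exp x + 1 ≠ 0 := by positivity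
  field_simp
  ring

lemma tanh_lt_one (x : ℝ) : Real.tanh x < 1 := by
  have : 0 < 2 / (Real.exp (2*x) + 1) := by positivity
  rw [tanh_eq]; linarith

lemma neg_one_lt_tanh (x : ℝ) : -1 < Real.tanh x := by
  have h1 : (0:ℝ) < Real.exp (2*x) := Real.exp_pos _
  have h2 : 2 / (Real.exp (2*x) + 1) < 2 := by
    rw [div_lt_iff₀ (by linarith)]
    nlinarith
  rw [tanh_eq]; linarith

lemma tanh_mono {x y : ℝ} (h : x ≤ y) : Real.tanh x ≤ Real.tanh y := by
  have h1 : (0:ℝ) < Real.exp (2*x) := Real.exp_pos _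
  have h2 : Real.exp (2*x) ≤ Real.exp (2*y) := Real.exp_le_exp.2 (by linarith)
  have h3 : 2 / (Real.exp (2*y) + 1) ≤ 2 / (Real.exp (2*x) + 1) := by
    gcongr
    all_goals linarith
  rw [tanh_eq, tanh_eq]; linarith

lemma continuous_tanh : Continuous Real.tanh := by
  rw [show Real.tanh = fun x => 1 - 2 / (Real.exp (2*x) + 1) from funext tanh_eq]
  refine continuous_const.sub (continuous_const.div (by continuity) ?_)
  intro x
  positivity

lemma binit_mem {wm wp : ℝ} (h : wm < wp) (x : ℝ) : burgersInit wm wp x ∈ Set.Ioo wm wp := by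
  have h1 := neg_one_lt_tanh x
  have h2 := tanh_lt_one x
  unfold burgersInit
  constructor <;> nlinarith

lemma binit_cont (wm wp : ℝ) : Continuous (burgersInit wm wp) := by
  unfold burgersInit
  exact continuous_const.add (continuous_const.mul continuous_tanh)

lemma fan_mem {wm wp : ℝ} (h : wm ≤ wp) (ξ : ℝ) : rarefactionFan wm wp ξ ∈ Set.Icc wm wp := by
  unfold rarefactionFan
  split_ifs with h1 h2
  · exact ⟨le_refl _, h⟩
  · exact ⟨not_lt.1 h1, h2⟩
  · exact ⟨h, le_refl _⟩

lemma fan_dist {wm wp c : ℝ} (hc : c ∈ Set.Icc wm wp) (ξ : ℝ) :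
    |rarefactionFan wm wp ξ - c| ≤ |ξ - c| := by
  obtain ⟨h1, h2⟩ := hc
  unfold rarefactionFan
  split_ifs with ha hb
  · rw [abs_of_nonpos (by linarith), abs_of_nonpos (by linarith)]; linarith
  · exact le_refl _
  · rw [abs_of_nonneg (by linarith [not_le.1 hb]), abs_of_nonneg (by linarith [not_le.1 hb])]
    linarith [not_le.1 hb]

lemma fan_ge {wm wp c : ℝ} (hc : c ∈ Set.Icc wm wp) {ξ : ℝ} (h : c ≤ ξ) :
    c ≤ rarefactionFan wm wp ξ := by
  obtain ⟨h1, h2⟩ := hc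
  unfold rarefactionFan
  split_ifs with ha hb <;> linarith

lemma fan_le {wm wp c : ℝ} (hc : c ∈ Set.Icc wm wp) {ξ : ℝ} (h : ξ ≤ c) :
    rarefactionFan wm wp ξ ≤ c := by
  obtain ⟨h1, h2⟩ := hc
  unfold rarefactionFan
  split_ifs with ha hb
  · linarith
  · linarith
  · linarith [not_le.1 hb]

lemma invert {γ : ℝ} (hγ : 1 < γ) {zb ρ u lv : ℝ} (hρ : 0 < ρ)
    (hl : lam2 γ ρ u = lv) (hz : z2 γ ρ u = zb) :
    ρ ^ ((γ-1)/2) = (lv - zb) / ((γ+1)/(γ-1)) ∧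
    ρ = ((lv - zb) / ((γ+1)/(γ-1))) ^ (((γ-1)/2)⁻¹) ∧
    u = lv - (lv - zb) / ((γ+1)/(γ-1)) := by
  have hg1 : (0:ℝ) < γ - 1 := by linarith
  have hg2 : (0:ℝ) < γ + 1 := by linarith
  unfold lam2 at hl
  unfold z2 at hz
  have h3 : (γ+1)/(γ-1) * (ρ ^ ((γ-1)/2)) = ρ ^ ((γ-1)/2) + 2/(γ-1) * ρ ^ ((γ-1)/2) := by
    field_simp
    ring
  have h2 : lv - zb = (γ+1)/(γ-1) * (ρ ^ ((γ-1)/2)) := by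
    rw [h3]; linarith
  have hκ : (γ+1)/(γ-1) ≠ 0 := ne_of_gt (by positivity)
  have e1 : ρ ^ ((γ-1)/2) = (lv - zb) / ((γ+1)/(γ-1)) := by
    rw [h2, mul_div_cancel_left₀ _ hκ]
  refine ⟨e1, ?_, by linarith⟩
  rw [← e1, Real.rpow_rpow_inv hρ.le (ne_of_gt (by positivity))]

end RareAux

namespace RareAux

open Set

lemma char_const {w : ℝ → ℝ → ℝ}
    (hsm : ContDiffOn ℝ (⊤ : ℕ∞) (fun q : ℝ × ℝ => w q.1 q.2)
      ((Set.Ici (0:ℝ)) ×ˢ (Set.univ : Set ℝ)))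
    (heq : ∀ t ∈ Set.Ici (0:ℝ), ∀ x : ℝ,
      derivWithin (fun s => w s x) (Set.Ici 0) t + w t x * deriv (w t) x = 0)
    (x₀ c : ℝ) (hc : w 0 x₀ = c) :
    ∀ t ∈ Set.Ici (0:ℝ), w t (x₀ + t * c) = c := by
  have hUD : UniqueDiffOn ℝ ((Set.Ici (0:ℝ)) ×ˢ (Set.univ : Set ℝ)) :=
    (uniqueDiffOn_Ici 0).prod uniqueDiffOn_univ
  have hdiff : DifferentiableOn ℝ (fun q : ℝ × ℝ => w q.1 q.2)
      ((Set.Ici (0:ℝ)) ×ˢ (Set.univ : Set ℝ)) := hsm.differentiableOn (by simp)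
  have hmem : ∀ s : ℝ, 0 ≤ s → ∀ x : ℝ, ((s, x) : ℝ × ℝ) ∈
      ((Set.Ici (0:ℝ)) ×ˢ (Set.univ : Set ℝ)) := fun s hs x => ⟨hs, trivial⟩
  set L : ℝ × ℝ → (ℝ × ℝ) →L[ℝ] ℝ :=
    fderivWithin ℝ (fun q : ℝ × ℝ => w q.1 q.2) ((Set.Ici (0:ℝ)) ×ˢ (Set.univ : Set ℝ))
    with hLdef
  have hFD : ∀ s : ℝ, 0 ≤ s → ∀ x : ℝ, HasFDerivWithinAt (fun q : ℝ × ℝ => w q.1 q.2)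
      (L (s, x)) ((Set.Ici (0:ℝ)) ×ˢ (Set.univ : Set ℝ)) (s, x) :=
    fun s hs x => (hdiff _ (hmem s hs x)).hasFDerivWithinAt
  -- identification of partial derivatives
  have hpx : ∀ s : ℝ, 0 ≤ s → ∀ x : ℝ, HasDerivAt (w s) (L (s, x) (0, 1)) x := by
    intro s hs x
    have hline : HasDerivAt (fun y : ℝ => ((s, y) : ℝ × ℝ)) ((0, 1) : ℝ × ℝ) x :=
      HasDerivAt.prodMk (hasDerivAt_const x s) (hasDerivAt_id x)
    have h := (hFD s hs x).comp_hasDerivWithinAt x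
      (hline.hasDerivWithinAt (s := Set.univ)) (fun y _ => hmem s hs y)
    rw [← hasDerivWithinAt_univ]
    exact h
  have hpt : ∀ s : ℝ, 0 ≤ s → ∀ x : ℝ,
      HasDerivWithinAt (fun r => w r x) (L (s, x) (1, 0)) (Set.Ici 0) s := by
    intro s hs x
    have hline : HasDerivAt (fun r : ℝ => ((r, x) : ℝ × ℝ)) ((1, 0) : ℝ × ℝ) s :=
      HasDerivAt.prodMk (hasDerivAt_id s) (hasDerivAt_const s x)
    exact (hFD s hs x).comp_hasDerivWithinAt s hline.hasDerivWithinAt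
      (fun r hr => hmem r hr x)
  have hpde : ∀ s : ℝ, 0 ≤ s → ∀ x : ℝ, L (s, x) (1, 0) = -(w s x * L (s, x) (0, 1)) := by
    intro s hs x
    have h1 := (hpt s hs x).derivWithin (uniqueDiffOn_Ici 0 s hs)
    have h2 := (hpx s hs x).deriv
    have h3 := heq s hs x
    rw [h1, h2] at h3
    linarith
  -- the derivative of the solution along the characteristic line
  have hf' : ∀ s : ℝ, 0 ≤ s → HasDerivWithinAt (fun r => w r (x₀ + r * c) - c)
      (-(L (s, x₀ + s * c) (0, 1)) * (w s (x₀ + s * c) - c)) (Set.Ici 0) s := by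
    intro s hs
    have hline : HasDerivAt (fun r : ℝ => ((r, x₀ + r * c) : ℝ × ℝ)) ((1, c) : ℝ × ℝ) s := by
      have h := HasDerivAt.prodMk (hasDerivAt_id s) (((hasDerivAt_id s).mul_const c).const_add x₀)
      simpa using h
    have h0 : HasDerivWithinAt (fun r => w r (x₀ + r * c))
        (L (s, x₀ + s * c) (1, c)) (Set.Ici 0) s :=
      (hFD s hs (x₀ + s * c)).comp_hasDerivWithinAt s hline.hasDerivWithinAt
        (fun r hr => hmem r hr (x₀ + r * c))
    have h1 : L (s, x₀ + s * c) ((1 : ℝ), (c : ℝ))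
        = -(L (s, x₀ + s * c) (0, 1)) * (w s (x₀ + s * c) - c) := by
      have hsplit : ((1, c) : ℝ × ℝ) = (1, 0) + c • ((0, 1) : ℝ × ℝ) := by
        simp [Prod.ext_iff]
      rw [hsplit, map_add, ContinuousLinearMap.map_smul, hpde s hs _, smul_eq_mul]
      ring
    rw [← h1]
    exact h0.sub_const c
  -- continuity of the coefficient
  have hacont : ContinuousOn (fun s => L (s, x₀ + s * c) (0, 1)) (Set.Ici 0) := by
    have hLcont : ContinuousOn L ((Set.Ici (0:ℝ)) ×ˢ (Set.univ : Set ℝ)) := by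
      rw [hLdef]
      exact hsm.continuousOn_fderivWithin hUD (by simp)
    have hγc : Continuous (fun s : ℝ => ((s, x₀ + s * c) : ℝ × ℝ)) := by continuity
    have h1 : ContinuousOn (fun s => L (s, x₀ + s * c)) (Set.Ici 0) :=
      hLcont.comp hγc.continuousOn (fun s hs => hmem s hs _)
    exact (ContinuousLinearMap.apply ℝ ℝ ((0:ℝ), (1:ℝ))).continuous.comp_continuousOn h1
  -- Gronwall on [0, t]
  intro t ht
  have ht' : (0:ℝ) ≤ t := ht
  obtain ⟨C, hC⟩ := (isCompact_Icc (a := (0:ℝ)) (b := t)).exists_bound_of_continuousOn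
    (hacont.mono Set.Icc_subset_Ici_self)
  have hclmem : ∀ s : ℝ, min (max s 0) t ∈ Set.Icc (0:ℝ) t :=
    fun s => ⟨le_min (le_max_right s 0) ht', min_le_right _ _⟩
  have hcleq : ∀ s ∈ Set.Icc (0:ℝ) t, min (max s 0) t = s := by
    intro s hs
    rw [max_eq_left hs.1, min_eq_left hs.2]
  set v : ℝ → ℝ → ℝ := fun s y => -(L (min (max s 0) t, x₀ + (min (max s 0) t) * c) (0, 1)) * y
    with hvdef
  have hlip : ∀ s : ℝ, LipschitzWith (⟨max C 0, le_max_right _ _⟩ : NNReal) (v s) := by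
    intro s
    apply LipschitzWith.of_dist_le_mul
    intro y z
    simp only [hvdef, Real.dist_eq]
    have e1 : -(L (min (max s 0) t, x₀ + (min (max s 0) t) * c) (0, 1)) * y
        - -(L (min (max s 0) t, x₀ + (min (max s 0) t) * c) (0, 1)) * z
        = -(L (min (max s 0) t, x₀ + (min (max s 0) t) * c) (0, 1)) * (y - z) := by ring
    rw [e1, abs_mul, abs_neg]
    apply mul_le_mul_of_nonneg_right _ (abs_nonneg _)
    calc |L (min (max s 0) t, x₀ + (min (max s 0) t) * c) (0, 1)|
        ≤ C := by
          have := hC _ (hclmem s)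
          rwa [Real.norm_eq_abs] at this
      _ ≤ max C 0 := le_max_left _ _
  have hfc : ContinuousOn (fun r => w r (x₀ + r * c) - c) (Set.Icc 0 t) :=
    fun s hs => ((hf' s hs.1).continuousWithinAt).mono Set.Icc_subset_Ici_self
  have hfd : ∀ s ∈ Set.Ico (0:ℝ) t, HasDerivWithinAt (fun r => w r (x₀ + r * c) - c)
      (v s ((fun r => w r (x₀ + r * c) - c) s)) (Set.Ici s) s := by
    intro s hs
    have h := (hf' s hs.1).mono (Set.Ici_subset_Ici.2 hs.1)
    have e : v s (w s (x₀ + s * c) - c)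
        = -(L (s, x₀ + s * c) (0, 1)) * (w s (x₀ + s * c) - c) := by
      simp only [hvdef, hcleq s ⟨hs.1, hs.2.le⟩]
    rw [e]
    exact h
  have hgd : ∀ s ∈ Set.Ico (0:ℝ) t, HasDerivWithinAt (fun _ : ℝ => (0:ℝ))
      (v s ((fun _ : ℝ => (0:ℝ)) s)) (Set.Ici s) s := by
    intro s hs
    have e : v s 0 = 0 := by simp [hvdef]
    simpa [e] using hasDerivWithinAt_const s (Set.Ici s) (0:ℝ)
  have hinit : dist ((fun r => w r (x₀ + r * c) - c) 0) ((fun _ : ℝ => (0:ℝ)) 0) ≤ 0 := by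
    simp [hc]
  have hdist := dist_le_of_trajectories_ODE hlip hfc hfd
    (continuousOn_const) hgd hinit t ⟨ht', le_refl t⟩
  rw [zero_mul] at hdist
  have : w t (x₀ + t * c) - c = 0 := by
    have h0 := dist_le_zero.1 hdist
    simpa using h0
  linarith

end RareAux

namespace RareAux

open Set

lemma abs_tanh_le_one (x : ℝ) : |Real.tanh x| ≤ 1 :=
  abs_le.2 ⟨(neg_one_lt_tanh x).le, (tanh_lt_one x).le⟩

lemma char_surj (wm wp : ℝ) (t x : ℝ) (ht : 0 ≤ t) :
    ∃ x₀ : ℝ, x = x₀ + t * burgersInit wm wp x₀ := by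
  set B := t * (|(wp + wm)/2| + |(wp - wm)/2|) with hB
  have hB0 : 0 ≤ B := mul_nonneg ht (by positivity)
  have hbound : ∀ y : ℝ, |t * burgersInit wm wp y| ≤ B := by
    intro y
    rw [abs_mul, abs_of_nonneg ht, hB]
    apply mul_le_mul_of_nonneg_left _ ht
    unfold burgersInit
    calc |(wp + wm)/2 + (wp - wm)/2 * Real.tanh y|
        ≤ |(wp + wm)/2| + |(wp - wm)/2 * Real.tanh y| := abs_add_le _ _
      _ ≤ |(wp + wm)/2| + |(wp - wm)/2| := by
          rw [abs_mul]
          have := abs_tanh_le_one y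
          nlinarith [abs_nonneg ((wp - wm)/2)]
  have hφc : ContinuousOn (fun y : ℝ => y + t * burgersInit wm wp y)
      (Set.Icc (x - B) (x + B)) :=
    (continuous_id.add (continuous_const.mul (binit_cont wm wp))).continuousOn
  have h1 : (fun y : ℝ => y + t * burgersInit wm wp y) (x - B) ≤ x := by
    have := (abs_le.1 (hbound (x - B))).2
    simp only []
    linarith
  have h2 : x ≤ (fun y : ℝ => y + t * burgersInit wm wp y) (x + B) := by
    have := (abs_le.1 (hbound (x + B))).1
    simp only []
    linarith
  obtain ⟨x₀, _, hx₀⟩ := intermediate_value_Icc (by linarith : x - B ≤ x + B) hφc ⟨h1, h2⟩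
  exact ⟨x₀, hx₀.symm⟩

end RareAux


set_option maxHeartbeats 1000000

/-- the smooth approximate 2-rarefaction wave converges uniformly
to the exact 2-rarefaction wave fan as `t → +∞`. -/
theorem approxRarefaction_tendsto_rarefaction (γ ρm um ρp up : ℝ)
    (hγ : 1 < γ) (hρm : 0 < ρm) (hρp : 0 < ρp)
    (hz : z2 γ ρp up = z2 γ ρm um)
    (hlam : lam2 γ ρm um < lam2 γ ρp up)
    (w : ℝ → ℝ → ℝ) (hw : IsBurgersSol (lam2 γ ρm um) (lam2 γ ρp up) w)
    (ρb ub : ℝ → ℝ → ℝ) (hr : IsApproxRarefaction γ ρp up w ρb ub)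
    (ρr ur : ℝ → ℝ) (hprof : IsRarefactionProfile γ ρm um ρp up ρr ur) :
    Tendsto (fun t : ℝ => ⨆ x : ℝ, (|ρb t x - ρr (x / t)| ⊔ |ub t x - ur (x / t)|))
      atTop (nhds 0) := by
  classical
  set wm := lam2 γ ρm um with hwm
  set wp := lam2 γ ρp up with hwp
  set zb := z2 γ ρp up with hzb
  have hγ1 : (0:ℝ) < γ - 1 := by linarith
  have hκpos : (0:ℝ) < (γ + 1)/(γ - 1) := by positivity
  have hκ1 : 1 < (γ + 1)/(γ - 1) := by
    rw [lt_div_iff₀ hγ1]; linarith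
  set F : ℝ → ℝ := fun lv => ((lv - zb) / ((γ + 1)/(γ - 1))) ^ (((γ - 1)/2)⁻¹) with hF
  -- representations of the waves through `w` and the fan
  have hrep_b : ∀ t : ℝ, 0 ≤ t → ∀ x : ℝ,
      ρb t x = F (w (1 + t) x) ∧
      ub t x = w (1 + t) x - (w (1 + t) x - zb) / ((γ + 1)/(γ - 1)) := by
    intro t ht x
    obtain ⟨_, h2, h3⟩ := RareAux.invert hγ (hr.pos t ht x) (hr.lam t ht x) (hr.inv t ht x)
    exact ⟨h2, h3⟩
  have hrep_r : ∀ ξ : ℝ,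
      ρr ξ = F (rarefactionFan wm wp ξ) ∧
      ur ξ = rarefactionFan wm wp ξ - (rarefactionFan wm wp ξ - zb) / ((γ + 1)/(γ - 1)) := by
    intro ξ
    obtain ⟨_, h2, h3⟩ := RareAux.invert hγ (hprof.pos ξ) (hprof.lam ξ) (hprof.inv ξ)
    exact ⟨h2, h3⟩
  -- uniform continuity of `F` on the compact range
  have hFcont : ContinuousOn F (Set.Icc wm wp) := by
    apply ContinuousOn.rpow_const
    · exact ((continuous_id.sub continuous_const).div_const _).continuousOn
    · intro lv _
      right
      rw [inv_nonneg]
      linarith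
  have hUC := (isCompact_Icc (a := wm) (b := wp)).uniformContinuousOn_of_continuous hFcont
  rw [Metric.uniformContinuousOn_iff] at hUC
  rw [Metric.tendsto_atTop]
  intro ε hε
  obtain ⟨δ, hδpos, hδ⟩ := hUC (ε/2) (by linarith)
  set η := min δ (ε/2) with hη
  have hηpos : 0 < η := lt_min hδpos (by linarith)
  set M := max |wm| |wp| with hM
  have hM0 : 0 ≤ M := le_trans (abs_nonneg wm) (le_max_left _ _)
  have hrpos : (0:ℝ) < (wp - wm)/2 := by
    have : wm < wp := hlam
    linarith
  set R := max M (4 * ((wp - wm)/2) / η + 1) with hR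
  have hRM : M ≤ R := le_max_left _ _
  have hR0 : 0 ≤ R := le_trans hM0 hRM
  have htail : (wp - wm)/2 * (1 - Real.tanh R) < η/2 := by
    have hEpos : (0:ℝ) < Real.exp (2*R) + 1 := by positivity
    have hE : 4 * ((wp - wm)/2) / η < Real.exp (2*R) + 1 := by
      have h1 := Real.add_one_le_exp (2*R)
      have h2 : 4 * ((wp - wm)/2) / η + 1 ≤ R := le_max_right _ _
      have h3 : (0:ℝ) < 4 * ((wp - wm)/2) / η := by positivity
      linarith
    have h4 : 1 - Real.tanh R = 2 / (Real.exp (2*R) + 1) := by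
      rw [RareAux.tanh_eq]; ring
    rw [h4]
    have h6 : (wp - wm)/2 * (2 / (Real.exp (2*R) + 1)) = (wp - wm) / (Real.exp (2*R) + 1) := by
      ring
    rw [h6, div_lt_iff₀ hEpos]
    have h5 : 4 * ((wp - wm)/2) < η * (Real.exp (2*R) + 1) := by
      rw [div_lt_iff₀ hηpos] at hE
      linarith [mul_comm η (Real.exp (2*R) + 1)]
    nlinarith
  set T := max 1 ((R + M)/(η/2) + 1) with hT
  refine ⟨T, fun t htT => ?_⟩
  have hT1 : (1:ℝ) ≤ t := le_trans (le_max_left _ _) htT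
  have ht0 : (0:ℝ) < t := by linarith
  have hmid : (R + M)/t < η/2 := by
    have h1 : (R + M)/(η/2) + 1 ≤ t := le_trans (le_max_right _ _) htT
    have h2 : (0:ℝ) < η/2 := by linarith
    rw [div_lt_iff₀ ht0]
    have h3 : ((R + M)/(η/2)) * (η/2) = R + M := div_mul_cancel₀ _ h2.ne'
    nlinarith
  have key : ∀ x : ℝ, |ρb t x - ρr (x/t)| ⊔ |ub t x - ur (x/t)| ≤ ε/2 := by
    intro x
    obtain ⟨x₀, hx₀⟩ := RareAux.char_surj wm wp (1 + t) x (by linarith)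
    set c := burgersInit wm wp x₀ with hc
    have hcIoo : c ∈ Set.Ioo wm wp := RareAux.binit_mem hlam x₀
    have hcIcc : c ∈ Set.Icc wm wp := ⟨hcIoo.1.le, hcIoo.2.le⟩
    have hcM : |c| ≤ M := by
      rw [abs_le]
      constructor
      · linarith [neg_abs_le wm, le_max_left |wm| |wp|, hcIcc.1]
      · linarith [le_abs_self wp, le_max_right |wm| |wp|, hcIcc.2]
    have hwval : w (1 + t) x = c := by
      rw [hx₀]
      exact RareAux.char_const hw.smooth hw.eq x₀ c (by rw [hw.init x₀]) (1 + t)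
        (by simp only [Set.mem_Ici]; linarith)
    have hfan := RareAux.fan_mem (le_of_lt hlam) (x/t)
    have hxtc : x/t - c = (x₀ + c)/t := by
      rw [hx₀]
      field_simp
      ring
    have hΔ : |w (1 + t) x - rarefactionFan wm wp (x/t)| < η := by
      rw [hwval, abs_sub_comm]
      by_cases hxR : |x₀| ≤ R
      · have h1 := RareAux.fan_dist hcIcc (x/t)
        have h2 : |x/t - c| ≤ (R + M)/t := by
          rw [hxtc, abs_div, abs_of_pos ht0]
          gcongr
          exact (abs_add_le x₀ c).trans (add_le_add hxR hcM)
        have h3 : η/2 < η := by linarith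
        linarith
      · push_neg at hxR
        rcases lt_abs.1 hxR with hpos | hneg
        · -- R < x₀ : near the right state
          have hx₀c : 0 ≤ x₀ + c := by
            have := neg_le_of_abs_le hcM
            linarith
          have hcle : c ≤ x/t := by
            have h0 : 0 ≤ x/t - c := by rw [hxtc]; positivity
            linarith
          have h1 : c ≤ rarefactionFan wm wp (x/t) := RareAux.fan_ge hcIcc hcle
          have h2 : rarefactionFan wm wp (x/t) ≤ wp := hfan.2
          have h3 : wp - c = (wp - wm)/2 * (1 - Real.tanh x₀) := by
            rw [hc]
            unfold burgersInit
            ring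
          have h4 : Real.tanh R ≤ Real.tanh x₀ := RareAux.tanh_mono (by linarith)
          have h5 : wp - c ≤ (wp - wm)/2 * (1 - Real.tanh R) := by
            rw [h3]
            nlinarith
          rw [abs_of_nonneg (by linarith : (0:ℝ) ≤ rarefactionFan wm wp (x/t) - c)]
          linarith
        · -- R < -x₀ : near the left state
          have hx₀c : x₀ + c ≤ 0 := by
            have := le_of_abs_le hcM
            linarith
          have hcle : x/t ≤ c := by
            have h0 : x/t - c ≤ 0 := by
              rw [hxtc]
              apply div_nonpos_of_nonpos_of_nonneg hx₀c ht0.le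
            linarith
          have h1 : rarefactionFan wm wp (x/t) ≤ c := RareAux.fan_le hcIcc hcle
          have h2 : wm ≤ rarefactionFan wm wp (x/t) := hfan.1
          have h3 : c - wm = (wp - wm)/2 * (1 + Real.tanh x₀) := by
            rw [hc]
            unfold burgersInit
            ring
          have h4 : Real.tanh x₀ ≤ - Real.tanh R := by
            rw [← Real.tanh_neg]
            exact RareAux.tanh_mono (by linarith)
          have h5 : c - wm ≤ (wp - wm)/2 * (1 - Real.tanh R) := by
            rw [h3]
            nlinarith
          rw [abs_of_nonpos (by linarith : rarefactionFan wm wp (x/t) - c ≤ 0)]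
          linarith
    have hwIcc : w (1 + t) x ∈ Set.Icc wm wp := hwval ▸ hcIcc
    have hρ : |ρb t x - ρr (x/t)| < ε/2 := by
      rw [(hrep_b t ht0.le x).1, (hrep_r (x/t)).1, ← Real.dist_eq]
      apply hδ _ hwIcc _ hfan
      rw [Real.dist_eq]
      exact lt_of_lt_of_le hΔ (min_le_left _ _)
    have hu : |ub t x - ur (x/t)| < ε/2 := by
      rw [(hrep_b t ht0.le x).2, (hrep_r (x/t)).2]
      have e1 : w (1 + t) x - (w (1 + t) x - zb) / ((γ + 1)/(γ - 1))
          - (rarefactionFan wm wp (x/t)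
            - (rarefactionFan wm wp (x/t) - zb) / ((γ + 1)/(γ - 1)))
          = (w (1 + t) x - rarefactionFan wm wp (x/t)) * (1 - 1/((γ + 1)/(γ - 1))) := by
        ring
      rw [e1, abs_mul]
      have h1 : |1 - 1/((γ + 1)/(γ - 1))| ≤ 1 := by
        rw [abs_of_nonneg]
        · have : 0 < 1/((γ + 1)/(γ - 1)) := by positivity
          linarith
        · have : 1/((γ + 1)/(γ - 1)) ≤ 1 := by
            rw [div_le_one hκpos]
            linarith
          linarith
      calc |w (1 + t) x - rarefactionFan wm wp (x/t)| * |1 - 1/((γ + 1)/(γ - 1))|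
          ≤ |w (1 + t) x - rarefactionFan wm wp (x/t)| * 1 :=
            mul_le_mul_of_nonneg_left h1 (abs_nonneg _)
        _ = |w (1 + t) x - rarefactionFan wm wp (x/t)| := mul_one _
        _ < η := hΔ
        _ ≤ ε/2 := min_le_right _ _
    exact max_le hρ.le hu.le
  have hS0 : 0 ≤ ⨆ x : ℝ, (|ρb t x - ρr (x/t)| ⊔ |ub t x - ur (x/t)|) :=
    Real.iSup_nonneg (fun x => le_trans (abs_nonneg _) (le_max_left _ _))
  have hSle : (⨆ x : ℝ, (|ρb t x - ρr (x/t)| ⊔ |ub t x - ur (x/t)|)) ≤ ε/2 := ciSup_le key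
  rw [Real.dist_eq, sub_zero, abs_of_nonneg hS0]
  linarith


end
end
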